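/- If (X,Y,Z,Z̄,Q) are jointly distributed with X–QZ̄–Y a Markov chain, I(Y;Q|XZ̄)=0 and I(X;Q|YZ̄)=0, then there exists Q' with H(Q'|XZ̄)=H(Q'|YZ̄)=0, XY–Q'Z̄–Q a (conditional) Markov chain, and I(XY;Q|Z̄) ≤ H(Q'|Z̄); equality holds iff H(Q'|QZ̄)=0. -/

import Mathlib

open Finset

/-- A probability mass function on a finite sample space. -/
def IsPMF {Ω : Type*} [Fintype Ω] (p : Ω → ℝ) : Prop :=
  (∀ ω, 0 ≤ p ω) ∧ ∑ ω, p ω = 1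

/-- Probability that the random variable `X` takes the value `x`. -/
noncomputable def pr {Ω 𝒳 : Type*} [Fintype Ω] [DecidableEq 𝒳]
    (p : Ω → ℝ) (X : Ω → 𝒳) (x : 𝒳) : ℝ :=
  ∑ ω, if X ω = x then p ω else 0

/-- Shannon entropy (in bits) of the random variable `X` under `p`. -/
noncomputable def H {Ω 𝒳 : Type*} [Fintype Ω] [Fintype 𝒳] [DecidableEq 𝒳]
    (p : Ω → ℝ) (X : Ω → 𝒳) : ℝ :=
  -∑ x, pr p X x * Real.logb 2 (pr p X x)

/-- Conditional entropy `H(X|Y)`. -/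
noncomputable def condH {Ω 𝒳 𝒴 : Type*} [Fintype Ω] [Fintype 𝒳] [DecidableEq 𝒳]
    [Fintype 𝒴] [DecidableEq 𝒴] (p : Ω → ℝ) (X : Ω → 𝒳) (Y : Ω → 𝒴) : ℝ :=
  H p (fun ω => (X ω, Y ω)) - H p Y

/-- Mutual information `I(X;Y)`. -/
noncomputable def MI {Ω 𝒳 𝒴 : Type*} [Fintype Ω] [Fintype 𝒳] [DecidableEq 𝒳]
    [Fintype 𝒴] [DecidableEq 𝒴] (p : Ω → ℝ) (X : Ω → 𝒳) (Y : Ω → 𝒴) : ℝ :=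
  H p X + H p Y - H p (fun ω => (X ω, Y ω))

/-- Conditional mutual information `I(X;Y|Z)`. -/
noncomputable def condMI {Ω 𝒳 𝒴 𝒵 : Type*} [Fintype Ω] [Fintype 𝒳] [DecidableEq 𝒳]
    [Fintype 𝒴] [DecidableEq 𝒴] [Fintype 𝒵] [DecidableEq 𝒵]
    (p : Ω → ℝ) (X : Ω → 𝒳) (Y : Ω → 𝒴) (Z : Ω → 𝒵) : ℝ :=
  condH p X Z - condH p X (fun ω => (Y ω, Z ω))

open Real

/-!
For fixed `z`, call `x` and `x'` linked when both occur with a common `y` in the support of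
`P(x, y | z)`. The two hypotheses say `P(q | x, z) = P(q | x, y, z) = P(q | y, z)` whenever
`P(x, y, z) > 0`, so `P(q | x, z)` is constant on the classes of the equivalence relation generated
by this link. The class of `X` given `Z̄` (with `Z̄` itself) is the common part `Q'`: it is a
function of `(X, Z̄)` and, on the support, of `(Y, Z̄)`, and `Q` depends on `(X, Z̄)` only through
it, which together with `Y – XZ̄ – Q` gives `XY – Q'Z̄ – Q`. Since `Q'` is a function of `(X, Z̄)`,
the chain rule turns this Markov chain into `I(XY; Q | Z̄) = I(Q'; Q | Z̄)
= H(Q' | Z̄) - H(Q' | QZ̄)`, and the last two claims follow from `H(Q' | QZ̄) ≥ 0`.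
-/

section Probability

variable {Ω : Type*} [Fintype Ω] {p : Ω → ℝ}

lemma pr_nonneg {𝒮 : Type*} [DecidableEq 𝒮] (hp : 0 ≤ p) (S : Ω → 𝒮) (s : 𝒮) :
    0 ≤ pr p S s :=
  sum_nonneg fun ω _ => ite_nonneg (hp ω) le_rfl

lemma exists_of_pr_ne_zero {𝒮 : Type*} [DecidableEq 𝒮] {S : Ω → 𝒮} {s : 𝒮}
    (h : pr p S s ≠ 0) : ∃ ω, p ω ≠ 0 ∧ S ω = s := by
  obtain ⟨ω, -, hω⟩ := exists_ne_zero_of_sum_ne_zero h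
  by_cases hS : S ω = s
  · exact ⟨ω, by simpa [hS] using hω, hS⟩
  · simp [hS] at hω

lemma pr_ne_zero_of_ne_zero {𝒮 : Type*} [DecidableEq 𝒮] (hp : 0 ≤ p) (S : Ω → 𝒮) {ω : Ω}
    (hω : p ω ≠ 0) : pr p S (S ω) ≠ 0 := by
  refine (lt_of_lt_of_le ((hp ω).lt_of_ne' hω) ?_).ne'
  exact (if_pos rfl).symm.le.trans <| single_le_sum (f := fun ω' => if S ω' = S ω then p ω' else 0)
    (fun ω' _ => ite_nonneg (hp ω') le_rfl) (mem_univ ω)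

lemma pr_congr {𝒮 𝒯 : Type*} [DecidableEq 𝒮] [DecidableEq 𝒯] {S : Ω → 𝒮} {T : Ω → 𝒯}
    {s : 𝒮} {t : 𝒯} (h : ∀ ω, S ω = s ↔ T ω = t) : pr p S s = pr p T t :=
  sum_congr rfl fun ω _ => if_congr (h ω) rfl rfl

lemma pr_comp {𝒯 𝒮 : Type*} [Fintype 𝒯] [DecidableEq 𝒯] [DecidableEq 𝒮]
    (p : Ω → ℝ) (T : Ω → 𝒯) (φ : 𝒯 → 𝒮) (s : 𝒮) :
    pr p (fun ω => φ (T ω)) s = ∑ t, if φ t = s then pr p T t else 0 := by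
  simp only [pr, ← sum_fiberwise univ T (fun ω => if φ (T ω) = s then p ω else 0)]
  refine sum_congr rfl fun t _ => ?_
  split_ifs with h
  · rw [sum_filter]
    exact sum_congr rfl fun ω _ => by split_ifs <;> simp_all
  · exact sum_eq_zero fun ω hω => by simp_all

lemma pr_pair_comp {𝒯 𝒮 : Type*} [DecidableEq 𝒯] [DecidableEq 𝒮] (p : Ω → ℝ) (T : Ω → 𝒯)
    (φ : 𝒯 → 𝒮) (t : 𝒯) (s : 𝒮) :
    pr p (fun ω => (T ω, φ (T ω))) (t, s) = if φ t = s then pr p T t else 0 := by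
  split_ifs with h
  · exact pr_congr fun ω => ⟨fun e => congrArg Prod.fst e, fun e => by rw [e, h]⟩
  · refine sum_eq_zero fun ω _ => if_neg fun e => h ?_
    simp only [Prod.mk.injEq] at e
    rw [← e.1, e.2]

lemma sum_pr {𝒯 : Type*} [Fintype 𝒯] [DecidableEq 𝒯] (p : Ω → ℝ) (T : Ω → 𝒯) :
    ∑ t, pr p T t = ∑ ω, p ω := by
  simp only [pr]
  rw [sum_comm]
  simp

lemma pr_le_pr_comp {𝒯 𝒮 : Type*} [Fintype 𝒯] [DecidableEq 𝒯] [DecidableEq 𝒮]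
    (hp : 0 ≤ p) (T : Ω → 𝒯) (φ : 𝒯 → 𝒮) (t : 𝒯) :
    pr p T t ≤ pr p (fun ω => φ (T ω)) (φ t) := by
  rw [pr_comp p T φ]
  exact (if_pos rfl).symm.le.trans <|
    single_le_sum (f := fun t' => if φ t' = φ t then pr p T t' else 0)
      (fun t' _ => ite_nonneg (pr_nonneg hp T t') le_rfl) (mem_univ t)

lemma pr_comp_ne_zero {𝒯 𝒮 : Type*} [Fintype 𝒯] [DecidableEq 𝒯] [DecidableEq 𝒮]
    (hp : 0 ≤ p) (T : Ω → 𝒯) (φ : 𝒯 → 𝒮) {t : 𝒯} (h : pr p T t ≠ 0) :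
    pr p (fun ω => φ (T ω)) (φ t) ≠ 0 :=
  (((pr_nonneg hp T t).lt_of_ne' h).trans_le (pr_le_pr_comp hp T φ t)).ne'

lemma sum_pr_pair_left {α γ : Type*} [Fintype α] [DecidableEq α] [DecidableEq γ]
    (p : Ω → ℝ) (A : Ω → α) (C : Ω → γ) (c : γ) :
    ∑ a, pr p (fun ω => (A ω, C ω)) (a, c) = pr p C c := by
  simp only [pr]
  rw [sum_comm]
  refine sum_congr rfl fun ω _ => ?_
  by_cases hc : C ω = c <;> simp [hc]

end Probability

section DeterminedBy

variable {Ω 𝒰 𝒱 𝒲 : Type*} {p : Ω → ℝ}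

def DeterminedBy (p : Ω → ℝ) (V : Ω → 𝒱) (W : Ω → 𝒲) : Prop :=
  ∀ ω ω', p ω ≠ 0 → p ω' ≠ 0 → W ω = W ω' → V ω = V ω'

lemma determinedBy_comp (W : Ω → 𝒲) (φ : 𝒲 → 𝒱) : DeterminedBy p (fun ω => φ (W ω)) W :=
  fun _ _ _ _ h => congrArg φ h

lemma determinedBy_self (W : Ω → 𝒲) : DeterminedBy p W W :=
  fun _ _ _ _ h => h

lemma determinedBy_fst (V : Ω → 𝒱) (W : Ω → 𝒲) : DeterminedBy p V (fun ω => (V ω, W ω)) :=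
  fun _ _ _ _ h => congrArg Prod.fst h

lemma determinedBy_snd (V : Ω → 𝒱) (W : Ω → 𝒲) : DeterminedBy p W (fun ω => (V ω, W ω)) :=
  fun _ _ _ _ h => congrArg Prod.snd h

lemma DeterminedBy.trans {U : Ω → 𝒰} {V : Ω → 𝒱} {W : Ω → 𝒲} (hUV : DeterminedBy p U V)
    (hVW : DeterminedBy p V W) : DeterminedBy p U W :=
  fun ω ω' hω hω' h => hUV ω ω' hω hω' (hVW ω ω' hω hω' h)

lemma DeterminedBy.pair {U : Ω → 𝒰} {V : Ω → 𝒱} {W : Ω → 𝒲} (hU : DeterminedBy p U W)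
    (hV : DeterminedBy p V W) :
    DeterminedBy p (fun ω => (U ω, V ω)) W :=
  fun ω ω' hω hω' h => Prod.ext (hU ω ω' hω hω' h) (hV ω ω' hω hω' h)

lemma DeterminedBy.pair_left {W : Ω → 𝒲} {W' : Ω → 𝒰} (h : DeterminedBy p W W') (V : Ω → 𝒱) :
    DeterminedBy p (fun ω => (V ω, W ω)) (fun ω => (V ω, W' ω)) :=
  (determinedBy_fst _ _).pair (h.trans (determinedBy_snd _ _))

end DeterminedBy

section Entropy

variable {Ω 𝒱 𝒲 : Type*} [Fintype Ω] [Fintype 𝒱] [DecidableEq 𝒱] [Fintype 𝒲] [DecidableEq 𝒲]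
  {p : Ω → ℝ}

lemma H_comp_eq (p : Ω → ℝ) (T : Ω → 𝒱) (φ : 𝒱 → 𝒲) :
    H p (fun ω => φ (T ω)) = -∑ t, pr p T t * logb 2 (pr p (fun ω => φ (T ω)) (φ t)) := by
  simp only [H, pr_comp p T φ, sum_mul, ite_mul, zero_mul]
  rw [sum_comm]
  simp

lemma H_pair_comm (p : Ω → ℝ) (V : Ω → 𝒱) (W : Ω → 𝒲) :
    H p (fun ω => (V ω, W ω)) = H p (fun ω => (W ω, V ω)) := by
  simp only [H]
  congr 1
  refine Fintype.sum_equiv (Equiv.prodComm 𝒱 𝒲) _ _ fun m => ?_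
  rw [pr_congr (T := fun ω => (W ω, V ω)) (t := m.swap) fun ω => by
    simp only [Prod.ext_iff, Prod.fst_swap, Prod.snd_swap]; tauto]
  rfl

lemma H_pair_of_determinedBy {V : Ω → 𝒱} {W : Ω → 𝒲} (h : DeterminedBy p V W) :
    H p (fun ω => (V ω, W ω)) = H p W := by
  rw [show H p W = _ from H_comp_eq p (fun ω => (V ω, W ω)) Prod.snd, H]
  congr 1
  refine sum_congr rfl fun m _ => ?_
  by_cases hm : pr p (fun ω => (V ω, W ω)) m = 0
  · simp [hm]
  rw [← sum_pr_pair_left p V W m.2, sum_eq_single m.1 _ (by simp)]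
  intro v _ hv
  by_contra hvm
  obtain ⟨ω, hω, hωm⟩ := exists_of_pr_ne_zero hm
  obtain ⟨ω', hω', hω'v⟩ := exists_of_pr_ne_zero hvm
  simp only [Prod.ext_iff] at hωm hω'v
  exact hv (hω'v.1 ▸ hωm.1 ▸ h ω ω' hω hω' (hωm.2.trans hω'v.2.symm)).symm

lemma H_eq_of_determinedBy {V : Ω → 𝒱} {W : Ω → 𝒲} (hVW : DeterminedBy p V W)
    (hWV : DeterminedBy p W V) : H p V = H p W := by
  rw [← H_pair_of_determinedBy hWV, H_pair_comm, H_pair_of_determinedBy hVW]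

lemma condH_eq_zero_of_determinedBy {V : Ω → 𝒱} {W : Ω → 𝒲} (h : DeterminedBy p V W) :
    condH p V W = 0 := by
  rw [condH, H_pair_of_determinedBy h, sub_self]

lemma condH_nonneg (hp : 0 ≤ p) (V : Ω → 𝒱) (W : Ω → 𝒲) : 0 ≤ condH p V W := by
  rw [condH, sub_nonneg, show H p W = _ from H_comp_eq p (fun ω => (V ω, W ω)) Prod.snd, H,
    neg_le_neg_iff]
  refine sum_le_sum fun m _ => ?_
  rcases (pr_nonneg hp (fun ω => (V ω, W ω)) m).eq_or_lt with hm | hm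
  · simp [← hm]
  exact mul_le_mul_of_nonneg_left
    (logb_le_logb_of_le one_lt_two hm (pr_le_pr_comp hp _ Prod.snd m)) hm.le

end Entropy

section ChainRule

variable {Ω α β γ δ : Type*} [Fintype Ω] [Fintype α] [DecidableEq α] [Fintype β] [DecidableEq β]
  [Fintype γ] [DecidableEq γ] [Fintype δ] [DecidableEq δ] {p : Ω → ℝ}
  {A : Ω → α} {B : Ω → β} {C : Ω → γ}

lemma condMI_congr_left {A' : Ω → δ} (h : DeterminedBy p A (fun ω => (A' ω, C ω)))
    (h' : DeterminedBy p A' (fun ω => (A ω, C ω))) : condMI p A B C = condMI p A' B C := by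
  simp only [condMI, condH]
  rw [H_eq_of_determinedBy (h.pair (determinedBy_snd _ _)) (h'.pair (determinedBy_snd _ _)),
    H_eq_of_determinedBy
      ((h.trans ((determinedBy_snd _ _).pair_left _)).pair (determinedBy_snd _ _))
      ((h'.trans ((determinedBy_snd _ _).pair_left _)).pair (determinedBy_snd _ _))]

lemma condMI_congr_right {C' : Ω → δ} (h : DeterminedBy p C C') (h' : DeterminedBy p C' C) :
    condMI p A B C = condMI p A B C' := by
  simp only [condMI, condH]
  rw [H_eq_of_determinedBy h h', H_eq_of_determinedBy (h.pair_left A) (h'.pair_left A),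
    H_eq_of_determinedBy ((h.pair_left B).pair_left A) ((h'.pair_left B).pair_left A),
    H_eq_of_determinedBy (h.pair_left B) (h'.pair_left B)]

lemma condMI_eq_add_of_determinedBy {Z : Ω → δ} (hC : DeterminedBy p C (fun ω => (A ω, Z ω))) :
    condMI p A B Z = condMI p C B Z + condMI p A B (fun ω => (C ω, Z ω)) := by
  have hACZ : DeterminedBy p (fun ω => (A ω, C ω, Z ω)) (fun ω => (A ω, Z ω)) :=
    (determinedBy_fst _ _).pair (hC.pair (determinedBy_snd _ _))
  have hABCZ : DeterminedBy p (fun ω => (A ω, B ω, C ω, Z ω)) (fun ω => (A ω, B ω, Z ω)) :=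
    fun ω ω' hω hω' h => by
      simp only [Prod.mk.injEq] at h ⊢
      exact ⟨h.1, h.2.1, hC ω ω' hω hω' (Prod.ext h.1 h.2.2), h.2.2⟩
  simp only [condMI, condH]
  rw [H_eq_of_determinedBy hACZ ((determinedBy_snd _ _).pair_left A),
    H_eq_of_determinedBy hABCZ (fun _ _ _ _ h => by simp_all),
    H_eq_of_determinedBy (V := fun ω => (B ω, C ω, Z ω)) (W := fun ω => (C ω, B ω, Z ω))
      (fun _ _ _ _ h => by simp_all) (fun _ _ _ _ h => by simp_all)]
  ring

lemma condMI_eq_zero_of_markov_chain {W : Ω → δ} (hW : DeterminedBy p W (fun ω => (A ω, C ω)))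
    (hC : DeterminedBy p C W) (hAW : condMI p A B W = 0) (hWC : condMI p W B C = 0) :
    condMI p A B C = 0 := by
  rw [condMI_eq_add_of_determinedBy hW, hWC,
    condMI_congr_right ((determinedBy_self W).pair hC) (determinedBy_fst _ _), hAW, add_zero]

end ChainRule

open InformationTheory in
theorem eq_of_sum_mul_log_div_eq_zero {ι : Type*} [Fintype ι] {P g : ι → ℝ} (hP : 0 ≤ P)
    (hg : 0 ≤ g) (hPg : ∀ i, P i ≠ 0 → g i ≠ 0) (hsum : ∑ i, g i ≤ ∑ i, P i)
    (h : ∑ i, P i * log (P i / g i) = 0) : P = g := by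
  have hterm : ∀ i, P i * log (P i / g i) + g i - P i = g i * klFun (P i / g i) := fun i => by
    rcases eq_or_ne (g i) 0 with hgi | hgi
    · simp [hgi, not_imp_not.1 (hPg i) hgi]
    · rw [klFun_apply]
      field_simp
  have hnonneg : ∀ i, 0 ≤ g i * klFun (P i / g i) :=
    fun i => mul_nonneg (hg i) (klFun_nonneg (div_nonneg (hP i) (hg i)))
  have hzero : ∑ i, g i * klFun (P i / g i) = 0 := by
    refine le_antisymm ?_ (sum_nonneg fun i _ => hnonneg i)
    simp only [← hterm, sum_sub_distrib, sum_add_distrib, h]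
    linarith
  funext i
  rcases eq_or_ne (g i) 0 with hgi | hgi
  · rw [hgi, not_imp_not.1 (hPg i) hgi]
  have := (sum_eq_zero_iff_of_nonneg fun i _ => hnonneg i).1 hzero i (mem_univ i)
  rw [mul_eq_zero, klFun_eq_zero_iff (div_nonneg (hP i) (hg i)), div_eq_one_iff_eq hgi] at this
  exact this.resolve_left hgi

section MutualInformation

variable {Ω α β γ : Type*} [Fintype Ω] [Fintype α] [DecidableEq α] [Fintype β] [DecidableEq β]
  [Fintype γ] [DecidableEq γ] {p : Ω → ℝ} (A : Ω → α) (B : Ω → β) (C : Ω → γ)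

lemma condMI_eq_sum (p : Ω → ℝ) :
    condMI p A B C = ∑ m : α × β × γ, pr p (fun ω => (A ω, B ω, C ω)) m *
      (logb 2 (pr p (fun ω => (A ω, B ω, C ω)) m) + logb 2 (pr p C m.2.2)
        - logb 2 (pr p (fun ω => (A ω, C ω)) (m.1, m.2.2))
        - logb 2 (pr p (fun ω => (B ω, C ω)) m.2)) := by
  set M := fun ω => (A ω, B ω, C ω)
  rw [condMI, condH, condH, show H p (fun ω => (A ω, C ω)) = _ from
      H_comp_eq p M fun m => (m.1, m.2.2),
    show H p C = _ from H_comp_eq p M fun m => m.2.2,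
    show H p (fun ω => (B ω, C ω)) = _ from H_comp_eq p M Prod.snd, H]
  simp only [mul_add, mul_sub, sum_add_distrib, sum_sub_distrib]
  ring

lemma sum_pr_mul_pr_div_pr (p : Ω → ℝ) :
    ∑ m : α × β × γ, pr p (fun ω => (A ω, C ω)) (m.1, m.2.2) *
      pr p (fun ω => (B ω, C ω)) m.2 / pr p C m.2.2 = ∑ ω, p ω := by
  rw [← sum_pr p C]
  simp only [Fintype.sum_prod_type]
  rw [sum_congr rfl fun a _ => sum_comm, sum_comm]
  refine sum_congr rfl fun c _ => ?_
  simp_rw [mul_div_assoc]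
  rw [← sum_mul_sum, ← sum_div, sum_pr_pair_left, sum_pr_pair_left, ← mul_div_assoc,
    mul_self_div_self]

lemma pr_marginals_ne_zero (hp : 0 ≤ p) {m : α × β × γ}
    (hm : pr p (fun ω => (A ω, B ω, C ω)) m ≠ 0) :
    pr p C m.2.2 ≠ 0 ∧ pr p (fun ω => (A ω, C ω)) (m.1, m.2.2) ≠ 0 ∧
      pr p (fun ω => (B ω, C ω)) m.2 ≠ 0 :=
  ⟨pr_comp_ne_zero hp _ (fun m => m.2.2) hm, pr_comp_ne_zero hp _ (fun m => (m.1, m.2.2)) hm,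
    pr_comp_ne_zero hp _ Prod.snd hm⟩

lemma log_two_mul_condMI (hp : 0 ≤ p) :
    log 2 * condMI p A B C = ∑ m : α × β × γ, pr p (fun ω => (A ω, B ω, C ω)) m *
      log (pr p (fun ω => (A ω, B ω, C ω)) m / (pr p (fun ω => (A ω, C ω)) (m.1, m.2.2) *
        pr p (fun ω => (B ω, C ω)) m.2 / pr p C m.2.2)) := by
  rw [condMI_eq_sum, mul_sum]
  refine sum_congr rfl fun m _ => ?_
  by_cases hm : pr p (fun ω => (A ω, B ω, C ω)) m = 0
  · simp [hm]
  obtain ⟨hc, hac, hbc⟩ := pr_marginals_ne_zero A B C hp hm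
  simp only [logb, log_div hm (div_ne_zero (mul_ne_zero hac hbc) hc),
    log_div (mul_ne_zero hac hbc) hc, log_mul hac hbc]
  field_simp
  ring

theorem condMI_eq_zero_iff (hp : 0 ≤ p) :
    condMI p A B C = 0 ↔ ∀ a b c, pr p (fun ω => (A ω, B ω, C ω)) (a, b, c) * pr p C c
      = pr p (fun ω => (A ω, C ω)) (a, c) * pr p (fun ω => (B ω, C ω)) (b, c) := by
  constructor
  · intro h
    have hPg := eq_of_sum_mul_log_div_eq_zero (pr_nonneg hp _)
      (fun m => div_nonneg (mul_nonneg (pr_nonneg hp _ _) (pr_nonneg hp _ _)) (pr_nonneg hp _ _))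
      (fun m hm => by
        obtain ⟨hc, hac, hbc⟩ := pr_marginals_ne_zero A B C hp hm
        exact div_ne_zero (mul_ne_zero hac hbc) hc)
      (by rw [sum_pr, sum_pr_mul_pr_div_pr]) (by rw [← log_two_mul_condMI A B C hp, h, mul_zero])
    intro a b c
    by_cases hc : pr p C c = 0
    · have hac : pr p (fun ω => (A ω, C ω)) (a, c) = 0 :=
        le_antisymm ((pr_le_pr_comp hp _ Prod.snd (a, c)).trans_eq hc) (pr_nonneg hp _ _)
      simp [hc, hac]
    · rw [congrFun hPg (a, b, c), div_mul_cancel₀ _ hc]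
  · intro h
    rw [condMI_eq_sum]
    refine sum_eq_zero fun ⟨a, b, c⟩ _ => ?_
    by_cases hm : pr p (fun ω => (A ω, B ω, C ω)) (a, b, c) = 0
    · simp [hm]
    obtain ⟨hc, hac, hbc⟩ := pr_marginals_ne_zero A B C hp hm
    rw [← logb_mul hm hc, h, logb_mul hac hbc]
    ring

end MutualInformation

section ConditionalProbability

variable {Ω α β γ 𝒲 : Type*} [Fintype Ω] [Fintype α] [DecidableEq α] [Fintype β] [DecidableEq β]
  [Fintype γ] [DecidableEq γ] [Fintype 𝒲] [DecidableEq 𝒲] {p : Ω → ℝ}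

/-- `P(B = b | W = w)`, with the value `0` when `P(W = w) = 0`. -/
noncomputable def condPr (p : Ω → ℝ) (B : Ω → β) (W : Ω → 𝒲) (b : β) (w : 𝒲) : ℝ :=
  pr p (fun ω => (B ω, W ω)) (b, w) / pr p W w

lemma pr_pair_eq_mul_condPr (hp : 0 ≤ p) (B : Ω → β) (W : Ω → 𝒲) (b : β) (w : 𝒲) :
    pr p (fun ω => (B ω, W ω)) (b, w) = pr p W w * condPr p B W b w := by
  rcases eq_or_ne (pr p W w) 0 with h | h
  · rw [h, zero_mul]
    exact le_antisymm ((pr_le_pr_comp hp _ Prod.snd (b, w)).trans_eq h) (pr_nonneg hp _ _)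
  · rw [condPr, mul_div_cancel₀ _ h]

lemma condPr_eq_of_condMI_eq_zero (hp : 0 ≤ p) {A : Ω → α} {B : Ω → β} {C : Ω → γ}
    (h : condMI p A B C = 0) {a : α} {c : γ} (hac : pr p (fun ω => (A ω, C ω)) (a, c) ≠ 0)
    (b : β) : condPr p B (fun ω => (A ω, C ω)) b (a, c) = condPr p B C b c := by
  have hc : pr p C c ≠ 0 := pr_comp_ne_zero hp _ Prod.snd hac
  rw [condPr, condPr, div_eq_div_iff hac hc,
    pr_congr (T := fun ω => (A ω, B ω, C ω)) (t := (a, b, c)) fun ω => by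
      simp only [Prod.mk.injEq]; tauto,
    (condMI_eq_zero_iff A B C hp).1 h a b c, mul_comm]

theorem condMI_comp_eq_zero (hp : 0 ≤ p) (W : Ω → 𝒲) (B : Ω → β) (φ : 𝒲 → γ)
    (h : ∀ w w', φ w = φ w' → ∀ b, condPr p B W b w = condPr p B W b w') :
    condMI p W B (fun ω => φ (W ω)) = 0 := by
  refine (condMI_eq_zero_iff W B _ hp).2 fun w b c => ?_
  have hWBc : pr p (fun ω => (W ω, B ω, φ (W ω))) (w, b, c)
      = if φ w = c then pr p (fun ω => (B ω, W ω)) (b, w) else 0 := by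
    refine (pr_congr fun ω => ?_).trans
      (pr_pair_comp p (fun ω => (B ω, W ω)) (fun t => φ t.2) (b, w) c)
    simp only [Prod.mk.injEq]
    tauto
  have hBc : pr p (fun ω => (B ω, φ (W ω))) (b, c)
      = ∑ w', if φ w' = c then pr p (fun ω => (B ω, W ω)) (b, w') else 0 := by
    rw [pr_comp p (fun ω => (B ω, W ω)) (fun t => (t.1, φ t.2)), Fintype.sum_prod_type]
    simp [Prod.mk.injEq, ite_and]
  rw [hWBc, pr_pair_comp, pr_comp p W φ, hBc]
  split_ifs with hw
  · rw [mul_sum, mul_sum]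
    refine sum_congr rfl fun w' _ => ?_
    split_ifs with hw'
    · rw [pr_pair_eq_mul_condPr hp, pr_pair_eq_mul_condPr hp, h w w' (hw.trans hw'.symm)]
      ring
    · simp
  · simp

end ConditionalProbability

section CommonPart

variable {Ω 𝒳 𝒴 𝒵 : Type*} [Fintype Ω] [DecidableEq 𝒳] [DecidableEq 𝒴] [DecidableEq 𝒵]
  (p : Ω → ℝ) (X : Ω → 𝒳) (Y : Ω → 𝒴) (Z : Ω → 𝒵)

def commonRel (z : 𝒵) (x x' : 𝒳) : Prop :=
  ∃ y, pr p (fun ω => (X ω, Y ω, Z ω)) (x, y, z) ≠ 0 ∧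
    pr p (fun ω => (X ω, Y ω, Z ω)) (x', y, z) ≠ 0

noncomputable def commonRep (z : 𝒵) (x : 𝒳) : 𝒳 :=
  (Quot.mk (commonRel p X Y Z z) x).out

noncomputable def commonPart (ω : Ω) : 𝒳 × 𝒵 :=
  (commonRep p X Y Z (Z ω) (X ω), Z ω)

variable {p X Y Z}

lemma commonRep_eq_of_commonRel {z : 𝒵} {x x' : 𝒳} (h : commonRel p X Y Z z x x') :
    commonRep p X Y Z z x = commonRep p X Y Z z x' :=
  congrArg Quot.out (Quot.sound h)

lemma eq_of_commonRep_eq {ι : Type*} {z : 𝒵} {κ : 𝒳 → ι}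
    (hκ : ∀ x x', commonRel p X Y Z z x x' → κ x = κ x') {x x' : 𝒳}
    (h : commonRep p X Y Z z x = commonRep p X Y Z z x') : κ x = κ x' := by
  have hmk : Quot.mk (commonRel p X Y Z z) x = Quot.mk _ x' := by
    rw [← Quot.out_eq (Quot.mk _ x), ← Quot.out_eq (Quot.mk _ x')]
    exact congrArg _ h
  exact congrArg (Quot.lift κ hκ) hmk

lemma commonPart_determinedBy_right (hp : 0 ≤ p) :
    DeterminedBy p (commonPart p X Y Z) (fun ω => (Y ω, Z ω)) := by
  intro ω ω' hω _ h
  simp only [Prod.mk.injEq] at h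
  simp only [commonPart, h.2]
  congr 1
  refine commonRep_eq_of_commonRel ⟨Y ω', ?_, pr_ne_zero_of_ne_zero hp _ ‹_›⟩
  simpa [h.1, h.2] using pr_ne_zero_of_ne_zero hp (fun ω => (X ω, Y ω, Z ω)) hω

variable [Fintype 𝒳] [Fintype 𝒴] [Fintype 𝒵] {𝒬 : Type*} [Fintype 𝒬] [DecidableEq 𝒬]
  {Q : Ω → 𝒬}

lemma condPr_eq_of_commonRel (hp : 0 ≤ p) (h1 : condMI p Y Q (fun ω => (X ω, Z ω)) = 0)
    (h2 : condMI p X Q (fun ω => (Y ω, Z ω)) = 0) {z : 𝒵} {x x' : 𝒳}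
    (h : commonRel p X Y Z z x x') (q : 𝒬) :
    condPr p Q (fun ω => (X ω, Z ω)) q (x, z) = condPr p Q (fun ω => (X ω, Z ω)) q (x', z) := by
  obtain ⟨y, hx, hx'⟩ := h
  have key : ∀ x, pr p (fun ω => (X ω, Y ω, Z ω)) (x, y, z) ≠ 0 →
      condPr p Q (fun ω => (X ω, Z ω)) q (x, z) = condPr p Q (fun ω => (Y ω, Z ω)) q (y, z) := by
    intro x hx
    have hyx : pr p (fun ω => (Y ω, X ω, Z ω)) (y, x, z) ≠ 0 := by
      rwa [pr_congr (T := fun ω => (X ω, Y ω, Z ω)) (t := (x, y, z)) fun ω => by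
        simp only [Prod.mk.injEq]; tauto]
    rw [← condPr_eq_of_condMI_eq_zero hp h1 hyx, ← condPr_eq_of_condMI_eq_zero hp h2 hx, condPr,
      condPr]
    congr 1 <;> exact pr_congr fun ω => by simp only [Prod.mk.injEq]; tauto
  rw [key x hx, key x' hx']

lemma condMI_commonPart_eq_zero (hp : 0 ≤ p) (h1 : condMI p Y Q (fun ω => (X ω, Z ω)) = 0)
    (h2 : condMI p X Q (fun ω => (Y ω, Z ω)) = 0) :
    condMI p (fun ω => (X ω, Y ω)) Q (fun ω => (commonPart p X Y Z ω, Z ω)) = 0 := by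
  refine condMI_eq_zero_of_markov_chain (W := fun ω => (X ω, Z ω))
    (determinedBy_comp (fun ω => ((X ω, Y ω), commonPart p X Y Z ω, Z ω)) fun t => (t.1.1, t.2.2))
    (determinedBy_comp (fun ω => (X ω, Z ω)) fun t => ((commonRep p X Y Z t.2 t.1, t.2), t.2))
    ?_ ?_
  · rw [condMI_congr_left (determinedBy_comp (fun ω => (Y ω, X ω, Z ω)) fun t => (t.2.1, t.1))
      (determinedBy_comp (fun ω => ((X ω, Y ω), X ω, Z ω)) fun t => t.1.2), h1]
  · rw [condMI_congr_right (C := fun ω => (commonPart p X Y Z ω, Z ω)) (C' := commonPart p X Y Z)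
      (determinedBy_comp (commonPart p X Y Z) fun c => (c, c.2)) (determinedBy_fst _ _)]
    refine condMI_comp_eq_zero hp (fun ω => (X ω, Z ω)) Q
      (fun t : 𝒳 × 𝒵 => (commonRep p X Y Z t.2 t.1, t.2)) ?_
    rintro ⟨x, z⟩ ⟨x', z'⟩ h q
    simp only [Prod.mk.injEq] at h
    obtain ⟨hxx', rfl⟩ := h
    exact eq_of_commonRep_eq (fun x x' hr => condPr_eq_of_commonRel hp h1 h2 hr q) hxx'

end CommonPart

theorem conditional_double_markov_general {Ω 𝒳 𝒴 𝒵' 𝒬 : Type*} [Fintype Ω]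
    [Fintype 𝒳] [DecidableEq 𝒳] [Fintype 𝒴] [DecidableEq 𝒴]
    [Fintype 𝒵'] [DecidableEq 𝒵'] [Fintype 𝒬] [DecidableEq 𝒬]
    (p : Ω → ℝ) (X : Ω → 𝒳) (Y : Ω → 𝒴) (Zb : Ω → 𝒵') (Q : Ω → 𝒬)
    (hp : IsPMF p)
    (h1 : condMI p Y Q (fun ω => (X ω, Zb ω)) = 0)
    (h2 : condMI p X Q (fun ω => (Y ω, Zb ω)) = 0) :
    ∃ Q' : Ω → 𝒳 × 𝒵',
      condH p Q' (fun ω => (X ω, Zb ω)) = 0 ∧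
      condH p Q' (fun ω => (Y ω, Zb ω)) = 0 ∧
      condMI p (fun ω => (X ω, Y ω)) Q (fun ω => (Q' ω, Zb ω)) = 0 ∧
      condMI p (fun ω => (X ω, Y ω)) Q Zb ≤ condH p Q' Zb ∧
      (condMI p (fun ω => (X ω, Y ω)) Q Zb = condH p Q' Zb ↔
        condH p Q' (fun ω => (Q ω, Zb ω)) = 0) := by
  have hX : DeterminedBy p (commonPart p X Y Zb) (fun ω => (X ω, Zb ω)) :=
    determinedBy_comp _ fun t : 𝒳 × 𝒵' => (commonRep p X Y Zb t.2 t.1, t.2)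
  have hMarkov := condMI_commonPart_eq_zero hp.1 h1 h2
  have hchain : condMI p (fun ω => (X ω, Y ω)) Q Zb = condMI p (commonPart p X Y Zb) Q Zb := by
    rw [condMI_eq_add_of_determinedBy
      (hX.trans (determinedBy_comp (fun ω => ((X ω, Y ω), Zb ω))
        fun t : (𝒳 × 𝒴) × 𝒵' => (t.1.1, t.2))),
      hMarkov, add_zero]
  refine ⟨commonPart p X Y Zb, condH_eq_zero_of_determinedBy hX,
    condH_eq_zero_of_determinedBy (commonPart_determinedBy_right hp.1), hMarkov, ?_, ?_⟩
  · rw [hchain]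
    exact sub_le_self _ (condH_nonneg hp.1 _ _)
  · rw [hchain]
    exact sub_eq_self

/-- conditional (given Zbar) version of the double Markov lemma:
if X-QZbar-Y, I(Y;Q|XZbar)=0 and I(X;Q|YZbar)=0, then there is a conditional common
random variable Q' (a deterministic function of (X,Zbar) and of (Y,Zbar), hence
representable with alphabet 𝒳 × 𝒵') with XY-Q'Zbar-Q and I(XY;Q|Zbar) ≤ H(Q'|Zbar),
with equality iff H(Q'|QZbar)=0. -/
theorem conditional_double_markov {Ω 𝒳 𝒴 𝒵' 𝒬 : Type*} [Fintype Ω]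
    [Fintype 𝒳] [DecidableEq 𝒳] [Fintype 𝒴] [DecidableEq 𝒴]
    [Fintype 𝒵'] [DecidableEq 𝒵'] [Fintype 𝒬] [DecidableEq 𝒬]
    (p : Ω → ℝ) (X : Ω → 𝒳) (Y : Ω → 𝒴) (Zb : Ω → 𝒵') (Q : Ω → 𝒬)
    (hp : IsPMF p)
    (hMC : condMI p X Y (fun ω => (Q ω, Zb ω)) = 0)
    (h1 : condMI p Y Q (fun ω => (X ω, Zb ω)) = 0)
    (h2 : condMI p X Q (fun ω => (Y ω, Zb ω)) = 0) :
    ∃ Q' : Ω → 𝒳 × 𝒵',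
      condH p Q' (fun ω => (X ω, Zb ω)) = 0 ∧
      condH p Q' (fun ω => (Y ω, Zb ω)) = 0 ∧
      condMI p (fun ω => (X ω, Y ω)) Q (fun ω => (Q' ω, Zb ω)) = 0 ∧
      condMI p (fun ω => (X ω, Y ω)) Q Zb ≤ condH p Q' Zb ∧
      (condMI p (fun ω => (X ω, Y ω)) Q Zb = condH p Q' Zb ↔
        condH p Q' (fun ω => (Q ω, Zb ω)) = 0) :=
  conditional_double_markov_general p X Y Zb Q hp h1 h2
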